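/- arXiv:math/0405387 — 3 statements merged into one kernel-verified Lean document; each statement's English description precedes it below -/
import Mathlib

section
/- Let Γ be a group equipped with a proper left-invariant metric d, and let f : Γ → ℂ be a bounded function such that for every ε > 0 there exists R ≥ 0 with |f(x) − f(y)| ≤ ε whenever the Gromov product satisfies (x|y) ≥ R. Then for every γ ∈ Γ the commutator v_γ ∘ M_f − M_f ∘ v_γ is a compact operator on ℓ²(Γ). (This is Lemma 21(1) of the paper, with the hypothesis 'f extends continuously to the Gromov compactification' expressed, as in the paper's Lemma 15, by the stated Gromov-product condition.) -/
/-!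
On the basis the commutator acts by `e_x ↦ (f x - f (x γ)) e_{x γ}`, so it is `v_γ ∘ M_g` with
`g x = f x - f (x γ)`. Since `d (x, x γ) = d (1, γ)`, the Gromov product `(x | x γ)` is at least
`d (1, x) - d (1, γ)`, which tends to infinity along the cofinite filter by properness; hence `g`
vanishes at infinity. Multiplication by such a `g` is the norm limit of the finite-rank
multiplications by its truncations `g 1_s`, hence compact.
-/

open scoped ENNReal
open Filter Topology

namespace lp

variable {ι 𝕜 : Type*} [RCLike 𝕜] {p : ℝ≥0∞}

theorem memℓp_mul {g : ι → 𝕜} (hg : Memℓp g ∞) (ξ : lp (fun _ : ι => 𝕜) p) :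
    Memℓp (g * ⇑ξ) p := by
  obtain ⟨C, hC⟩ := memℓp_infty_iff.1 hg
  refine ((lp.memℓp ξ).norm.const_mul C).mono fun i => ?_
  rw [Pi.mul_apply, norm_mul]
  exact mul_le_mul_of_nonneg_right (hC ⟨i, rfl⟩) (norm_nonneg _)

theorem single_eq_smul_single_one [DecidableEq ι] (x : ι) (c : 𝕜) :
    lp.single (E := fun _ : ι => 𝕜) p x c = c • lp.single p x 1 := by
  rw [← lp.single_smul, smul_eq_mul, mul_one]

theorem map_single_of_forall_apply_eq_mul [DecidableEq ι] {g : ι → 𝕜}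
    {A : lp (fun _ : ι => 𝕜) p → lp (fun _ : ι => 𝕜) p} (hA : ∀ ξ i, A ξ i = g i * ξ i)
    (x : ι) (c : 𝕜) : A (lp.single p x c) = lp.single p x (g x * c) := by
  ext i
  rw [hA, lp.single_apply, lp.single_apply]
  by_cases h : i = x
  · subst h; simp
  · simp [h]

variable [Fact (1 ≤ p)]

theorem norm_le_mul_norm_of_forall_norm_apply_le {C : ℝ} (hC : 0 ≤ C)
    {ξ η : lp (fun _ : ι => 𝕜) p} (h : ∀ i, ‖η i‖ ≤ C * ‖ξ i‖) : ‖η‖ ≤ C * ‖ξ‖ := by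
  have hp : p ≠ 0 := (zero_lt_one.trans_le Fact.out).ne'
  calc ‖η‖ ≤ ‖(C : 𝕜) • ξ‖ := lp.norm_mono hp fun i => by
        rw [lp.coeFn_smul, Pi.smul_apply, norm_smul, RCLike.norm_of_nonneg hC]; exact h i
    _ = C * ‖ξ‖ := by rw [norm_smul, RCLike.norm_of_nonneg hC]

noncomputable def mulCLM (g : ι → 𝕜) (hg : Memℓp g ∞) :
    lp (fun _ : ι => 𝕜) p →L[𝕜] lp (fun _ : ι => 𝕜) p :=
  LinearMap.mkContinuousOfExistsBound
    { toFun := fun ξ => ⟨g * ⇑ξ, memℓp_mul hg ξ⟩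
      map_add' := fun ξ η => by ext i; exact mul_add (g i) (ξ i) (η i)
      map_smul' := fun c ξ => by ext i; exact mul_left_comm (g i) c (ξ i) }
    (by
      obtain ⟨C, hC⟩ := memℓp_infty_iff.1 hg
      refine ⟨max C 0, fun ξ => norm_le_mul_norm_of_forall_norm_apply_le (le_max_right _ _)
        fun i => ?_⟩
      show ‖g i * ξ i‖ ≤ _
      rw [norm_mul]
      exact mul_le_mul_of_nonneg_right ((hC ⟨i, rfl⟩).trans (le_max_left _ _)) (norm_nonneg _))

@[simp] theorem mulCLM_apply {g : ι → 𝕜} (hg : Memℓp g ∞) (ξ : lp (fun _ : ι => 𝕜) p) (i : ι) :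
    mulCLM g hg ξ i = g i * ξ i := rfl

theorem norm_mulCLM_sub_mulCLM_le {g h : ι → 𝕜} (hg : Memℓp g ∞) (hh : Memℓp h ∞) {C : ℝ}
    (hC : 0 ≤ C) (hgh : ∀ i, ‖g i - h i‖ ≤ C) :
    ‖mulCLM (p := p) g hg - mulCLM h hh‖ ≤ C :=
  ContinuousLinearMap.opNorm_le_bound _ hC fun ξ =>
    norm_le_mul_norm_of_forall_norm_apply_le hC fun i => by
      rw [sub_apply, lp.coeFn_sub, Pi.sub_apply, mulCLM_apply, mulCLM_apply,
        ← sub_mul, norm_mul]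
      exact mul_le_mul_of_nonneg_right (hgh i) (norm_nonneg _)

theorem mulCLM_indicator_eq_sum [DecidableEq ι] (s : Finset ι) {g : ι → 𝕜}
    (hg : Memℓp ((s : Set ι).indicator g) ∞) :
    mulCLM (p := p) ((s : Set ι).indicator g) hg =
      ∑ x ∈ s, g x • (singleContinuousLinearMap 𝕜 (fun _ : ι => 𝕜) p x).comp
        (evalCLM 𝕜 (fun _ : ι => 𝕜) p x) := by
  refine ContinuousLinearMap.ext fun ξ => lp.ext (funext fun i => ?_)
  rw [mulCLM_apply, _root_.sum_apply, lp.coeFn_sum, Finset.sum_apply]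
  simp only [Set.indicator_apply, SetLike.mem_coe, ite_mul, zero_mul, smul_apply,
    ContinuousLinearMap.comp_apply, singleContinuousLinearMap_apply, coeFn_smul, Pi.smul_apply,
    lp.single_apply, Pi.single_apply, smul_eq_mul, mul_ite, mul_zero, Finset.sum_ite_eq]
  rfl

theorem isCompactOperator_mulCLM_indicator [DecidableEq ι] (s : Finset ι) {g : ι → 𝕜}
    (hg : Memℓp ((s : Set ι).indicator g) ∞) :
    IsCompactOperator (mulCLM (p := p) ((s : Set ι).indicator g) hg) := by
  rw [mulCLM_indicator_eq_sum]
  exact Submodule.sum_mem (compactOperator _ _ _) fun x _ => Submodule.smul_mem _ _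
    ((isCompactOperator_of_locallyCompactSpace_dom (evalCLM 𝕜 (fun _ : ι => 𝕜) p x)).clm_comp
      (singleContinuousLinearMap 𝕜 (fun _ : ι => 𝕜) p x))

theorem isCompactOperator_mulCLM {g : ι → 𝕜} (hg₀ : Tendsto g cofinite (𝓝 0))
    (hg : Memℓp g ∞) : IsCompactOperator (mulCLM (p := p) g hg) := by
  classical
  have htrunc (s : Finset ι) : Memℓp ((s : Set ι).indicator g) ∞ :=
    hg.mono' fun i => norm_indicator_le_norm_self g i
  refine isCompactOperator_of_tendsto (l := atTop)
    (F := fun s : Finset ι => mulCLM ((s : Set ι).indicator g) (htrunc s)) ?_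
    (Eventually.of_forall fun s => isCompactOperator_mulCLM_indicator s _)
  refine Metric.tendsto_nhds.2 fun ε hε => ?_
  have hsmall : {i | ε / 2 < ‖g i‖}.Finite := by
    simpa using eventually_cofinite.1
      ((tendsto_zero_iff_norm_tendsto_zero.1 hg₀).eventually (ge_mem_nhds (half_pos hε)))
  filter_upwards [eventually_ge_atTop hsmall.toFinset] with s hs
  rw [dist_eq_norm]
  refine (norm_mulCLM_sub_mulCLM_le _ _ (half_pos hε).le fun i => ?_).trans_lt (half_lt_self hε)
  by_cases hi : i ∈ s
  · simp [Set.indicator_of_mem (Finset.mem_coe.2 hi), (half_pos hε).le]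
  · have : ‖g i‖ ≤ ε / 2 := not_lt.1 fun h => hi (hs (hsmall.mem_toFinset.2 h))
    simpa [Set.indicator_of_notMem (Finset.mem_coe.not.2 hi)] using this

end lp

section GromovProduct

variable {Γ : Type*}

noncomputable def gromovProduct [One Γ] (d : Γ → Γ → ℝ) (x y : Γ) : ℝ := (d 1 x + d 1 y - d x y) / 2

theorem sub_le_gromovProduct_mul_right [Group Γ] {d : Γ → Γ → ℝ} (hd_symm : ∀ x y, d x y = d y x)
    (hd_triangle : ∀ x y z, d x z ≤ d x y + d y z)
    (hd_leftinv : ∀ g x y, d (g * x) (g * y) = d x y) (x γ : Γ) :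
    d 1 x - d 1 γ ≤ gromovProduct d x (x * γ) := by
  have hstep : d x (x * γ) = d 1 γ := by simpa using hd_leftinv x 1 γ
  have htri := hd_triangle 1 (x * γ) x
  rw [hd_symm (x * γ) x, hstep] at htri
  unfold gromovProduct
  linarith

theorem tendsto_sub_of_tendsto_gromovProduct [One Γ] {E : Type*} [SeminormedAddCommGroup E]
    {d : Γ → Γ → ℝ} {f : Γ → E}
    (hf : ∀ ε : ℝ, 0 < ε → ∃ R : ℝ, 0 ≤ R ∧ ∀ x y : Γ,
      R ≤ gromovProduct d x y → ‖f x - f y‖ ≤ ε)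
    {α : Type*} {l : Filter α} {u v : α → Γ}
    (huv : Tendsto (fun a => gromovProduct d (u a) (v a)) l atTop) :
    Tendsto (fun a => f (u a) - f (v a)) l (𝓝 0) := by
  refine Metric.tendsto_nhds.2 fun ε hε => ?_
  obtain ⟨R, -, hR⟩ := hf (ε / 2) (half_pos hε)
  filter_upwards [huv.eventually_ge_atTop R] with a ha
  rw [dist_zero_right]
  exact (hR _ _ ha).trans_lt (half_lt_self hε)

end GromovProduct

theorem commutator_right_translation_mult_compact_general
    {Γ : Type*} [Group Γ] [DecidableEq Γ]
    (d : Γ → Γ → ℝ)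
    (hd_symm : ∀ x y : Γ, d x y = d y x)
    (hd_triangle : ∀ x y z : Γ, d x z ≤ d x y + d y z)
    (hd_leftinv : ∀ g x y : Γ, d (g * x) (g * y) = d x y)
    (hd_proper : ∀ (x : Γ) (R : ℝ), {y : Γ | d x y ≤ R}.Finite)
    (f : Γ → ℂ)
    (hf : ∀ ε : ℝ, 0 < ε → ∃ R : ℝ, 0 ≤ R ∧ ∀ x y : Γ,
      R ≤ (d 1 x + d 1 y - d x y) / 2 → ‖f x - f y‖ ≤ ε)
    (Mf : lp (fun _ : Γ => ℂ) 2 →L[ℂ] lp (fun _ : Γ => ℂ) 2)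
    (hMf : ∀ (ξ : lp (fun _ : Γ => ℂ) 2) (x : Γ), Mf ξ x = f x * ξ x)
    (γ : Γ)
    (vγ : lp (fun _ : Γ => ℂ) 2 →L[ℂ] lp (fun _ : Γ => ℂ) 2)
    (hvγ : ∀ x : Γ, vγ (lp.single 2 x (1 : ℂ)) = lp.single 2 (x * γ) (1 : ℂ)) :
    IsCompactOperator (vγ ∘L Mf - Mf ∘L vγ) := by
  have hd_tendsto : Tendsto (d 1) cofinite atTop :=
    (northcott_iff_tendsto _).1 ⟨hd_proper 1⟩
  have hg : Tendsto (fun x => f x - f (x * γ)) cofinite (𝓝 0) :=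
    tendsto_sub_of_tendsto_gromovProduct hf <| tendsto_atTop_mono
      (sub_le_gromovProduct_mul_right hd_symm hd_triangle hd_leftinv · γ)
      (tendsto_atTop_add_const_right _ _ hd_tendsto)
  have hg_mem : Memℓp (fun x => f x - f (x * γ)) ∞ :=
    memℓp_infty_iff.2 (tendsto_zero_iff_norm_tendsto_zero.1 hg).bddAbove_range_of_cofinite
  have hvγ' (x : Γ) (c : ℂ) : vγ (lp.single 2 x c) = lp.single 2 (x * γ) c := by
    rw [lp.single_eq_smul_single_one, map_smul, hvγ, ← lp.single_eq_smul_single_one]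
  have hcomm : vγ ∘L Mf - Mf ∘L vγ = vγ ∘L lp.mulCLM _ hg_mem := by
    refine lp.ext_continuousLinearMap (by norm_num) fun x => ContinuousLinearMap.ext_ring ?_
    simp only [ContinuousLinearMap.comp_apply, sub_apply, lp.singleContinuousLinearMap_apply,
      lp.map_single_of_forall_apply_eq_mul hMf, lp.map_single_of_forall_apply_eq_mul
      (lp.mulCLM_apply hg_mem), hvγ']
    rw [← lp.single_sub]
    simp
  rw [hcomm]
  exact (lp.isCompactOperator_mulCLM hg hg_mem).clm_comp vγ

/-- Lemma 21(1) of the paper.  Let `Γ` be a group with a proper left-invariant metric `d`,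
and let `f : Γ → ℂ` be a bounded function such that for every `ε > 0` there is `R ≥ 0`
with `|f x - f y| ≤ ε` whenever the Gromov product `(x|y) = (d(e,x) + d(e,y) - d(x,y))/2`
is at least `R` (i.e. `f` extends continuously to the Gromov compactification).  Then the
commutator of the right-translation unitary `v_γ` with the multiplication operator `M_f`
is a compact operator on `ℓ²(Γ)`. -/
theorem commutator_right_translation_mult_compact
    {Γ : Type*} [Group Γ] [DecidableEq Γ]
    (d : Γ → Γ → ℝ)
    (hd_self : ∀ x : Γ, d x x = 0)
    (hd_sep : ∀ x y : Γ, d x y = 0 → x = y)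
    (hd_symm : ∀ x y : Γ, d x y = d y x)
    (hd_triangle : ∀ x y z : Γ, d x z ≤ d x y + d y z)
    (hd_leftinv : ∀ g x y : Γ, d (g * x) (g * y) = d x y)
    (hd_proper : ∀ (x : Γ) (R : ℝ), {y : Γ | d x y ≤ R}.Finite)
    (f : Γ → ℂ)
    (hf_bdd : ∃ C : ℝ, ∀ x : Γ, ‖f x‖ ≤ C)
    (hf : ∀ ε : ℝ, 0 < ε → ∃ R : ℝ, 0 ≤ R ∧ ∀ x y : Γ,
      R ≤ (d 1 x + d 1 y - d x y) / 2 → ‖f x - f y‖ ≤ ε)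
    (Mf : lp (fun _ : Γ => ℂ) 2 →L[ℂ] lp (fun _ : Γ => ℂ) 2)
    (hMf : ∀ (ξ : lp (fun _ : Γ => ℂ) 2) (x : Γ), Mf ξ x = f x * ξ x)
    (γ : Γ)
    (vγ : lp (fun _ : Γ => ℂ) 2 →L[ℂ] lp (fun _ : Γ => ℂ) 2)
    (hvγ : ∀ x : Γ, vγ (lp.single 2 x (1 : ℂ)) = lp.single 2 (x * γ) (1 : ℂ)) :
    IsCompactOperator (vγ ∘L Mf - Mf ∘L vγ) :=
  commutator_right_translation_mult_compact_general d hd_symm hd_triangle hd_leftinv hd_proper f hf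
    Mf hMf γ vγ hvγ
end

section
/- Let Γ be a group, γ ∈ Γ, and let f : Γ → ℂ be a bounded function such that the function x ↦ f(x·γ) − f(x) tends to 0 along the cofinite filter on Γ. Then the commutator v_γ ∘ M_f − M_f ∘ v_γ is a compact operator on ℓ²(Γ). (This is the key step in the proof of the paper's Lemma 21(1): the operator v_γ M_f v_{γ⁻¹} − M_f is multiplication by a function vanishing at infinity, hence compact.) -/
/-!
Evaluated at `y`, the commutator acts by `ξ ↦ (f (y * γ⁻¹) - f y) * ξ (y * γ⁻¹)`: it is `v_γ`
followed by multiplication by a function vanishing at infinity. Such an operator is the limit in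
operator norm of its truncations to finitely many coordinates, which have finite rank.
-/

open Filter Topology
open scoped ENNReal

namespace lp

variable {𝕜 ι : Type*} [RCLike 𝕜] [DecidableEq ι] {p : ℝ≥0∞} [Fact (1 ≤ p)]

theorem apply_eq_of_map_single {κ : Type*} [DecidableEq κ] {q : ℝ≥0∞} [Fact (1 ≤ q)]
    (hp : p ≠ ⊤) {σ : ι → κ} (hσ : σ.Injective)
    (L : lp (fun _ : ι => 𝕜) p →L[𝕜] lp (fun _ : κ => 𝕜) q)
    (hL : ∀ i, L (lp.single p i 1) = lp.single q (σ i) 1) (ξ : lp (fun _ : ι => 𝕜) p) (i : ι) :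
    L ξ (σ i) = ξ i := by
  have h : (evalCLM 𝕜 _ q (σ i)).comp L = evalCLM 𝕜 _ p i := by
    refine ext_continuousLinearMap hp fun j => ContinuousLinearMap.ext_ring ?_
    change L (lp.single p j (1 : 𝕜)) (σ i) = (lp.single p j (1 : 𝕜) : lp (fun _ : ι => 𝕜) p) i
    simp [hL, Pi.single_apply, hσ.eq_iff]
  exact congr($h ξ)

variable (𝕜 p) in
noncomputable def projFinset (s : Finset ι) : lp (fun _ : ι => 𝕜) p →L[𝕜] lp (fun _ : ι => 𝕜) p :=
  ∑ i ∈ s, (singleContinuousLinearMap 𝕜 _ p i).comp (evalCLM 𝕜 _ p i)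

theorem projFinset_apply (s : Finset ι) (ξ : lp (fun _ : ι => 𝕜) p) (i : ι) :
    projFinset 𝕜 p s ξ i = if i ∈ s then ξ i else 0 := by
  have h_eval (j : ι) : evalCLM 𝕜 (fun _ : ι => 𝕜) p j ξ = ξ j := rfl
  simp only [projFinset, FunLike.coe_sum, Finset.sum_apply, ContinuousLinearMap.comp_apply,
    singleContinuousLinearMap_apply, h_eval, coeFn_sum, lp.single_apply, Finset.sum_pi_single]

theorem isCompactOperator_projFinset (s : Finset ι) : IsCompactOperator (projFinset 𝕜 p s) := by
  refine Submodule.sum_mem (compactOperator _ _ _) fun i _ => ?_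
  exact (isCompactOperator_of_locallyCompactSpace_rng
    (singleContinuousLinearMap 𝕜 (fun _ : ι => 𝕜) p i)).comp_clm (evalCLM 𝕜 (fun _ : ι => 𝕜) p i)

theorem tendsto_projFinset_comp {E : Type*} [NormedAddCommGroup E] [NormedSpace 𝕜 E]
    {g : ι → 𝕜} (hg : Tendsto g cofinite (𝓝 0)) (A T : E →L[𝕜] lp (fun _ : ι => 𝕜) p)
    (hT : ∀ ξ i, T ξ i = g i * A ξ i) :
    Tendsto (fun s => (projFinset 𝕜 p s).comp T) atTop (𝓝 T) := by
  have hp : p ≠ 0 := (zero_lt_one.trans_le Fact.out).ne'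
  rw [Metric.tendsto_atTop]
  intro ε hε
  set δ := ε / (‖A‖ + 1)
  have hδ : 0 < δ := by positivity
  obtain ⟨s₀, hs₀⟩ : ∃ s₀ : Finset ι, ∀ i ∉ s₀, ‖g i‖ < δ := by
    refine ⟨(eventually_cofinite.1 (Metric.tendsto_nhds.1 hg δ hδ)).toFinset, fun i hi => ?_⟩
    simpa using hi
  refine ⟨s₀, fun s hs => ?_⟩
  rw [dist_comm, dist_eq_norm]
  have h_bound : ‖T - (projFinset 𝕜 p s).comp T‖ ≤ δ * ‖A‖ := by
    refine ContinuousLinearMap.opNorm_le_bound _ (by positivity) fun ξ => ?_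
    calc ‖(T - (projFinset 𝕜 p s).comp T) ξ‖ ≤ ‖(δ : 𝕜) • A ξ‖ := by
          refine norm_mono hp fun i => ?_
          rw [sub_apply, coeFn_sub, Pi.sub_apply, ContinuousLinearMap.comp_apply,
            projFinset_apply, coeFn_smul, Pi.smul_apply, smul_eq_mul, norm_mul, RCLike.norm_ofReal,
            abs_of_pos hδ]
          split_ifs with hi
          · rw [sub_self, _root_.norm_zero]
            positivity
          · rw [sub_zero, hT, norm_mul]
            exact mul_le_mul_of_nonneg_right (hs₀ i fun h => hi (hs h)).le (norm_nonneg _)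
      _ ≤ δ * ‖A‖ * ‖ξ‖ := by
          rw [norm_smul, RCLike.norm_ofReal, abs_of_pos hδ, mul_assoc]
          exact mul_le_mul_of_nonneg_left (A.le_opNorm ξ) hδ.le
  calc ‖T - (projFinset 𝕜 p s).comp T‖ ≤ δ * ‖A‖ := h_bound
    _ < δ * (‖A‖ + 1) := mul_lt_mul_of_pos_left (lt_add_one _) hδ
    _ = ε := div_mul_cancel₀ ε (by positivity)

theorem isCompactOperator_of_apply_eq_mul {E : Type*} [NormedAddCommGroup E] [NormedSpace 𝕜 E]
    {g : ι → 𝕜} (hg : Tendsto g cofinite (𝓝 0)) (A T : E →L[𝕜] lp (fun _ : ι => 𝕜) p)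
    (hT : ∀ ξ i, T ξ i = g i * A ξ i) : IsCompactOperator T :=
  isCompactOperator_of_tendsto (tendsto_projFinset_comp hg A T hT)
    (Eventually.of_forall fun s => (isCompactOperator_projFinset s).comp_clm T)

end lp

theorem commutator_right_translation_mult_compact_of_cofinite_general
    {Γ : Type*} [Group Γ] [DecidableEq Γ]
    (γ : Γ) (f : Γ → ℂ)
    (hf : ∀ ε : ℝ, 0 < ε → {x : Γ | ε ≤ ‖f (x * γ) - f x‖}.Finite)
    (Mf : lp (fun _ : Γ => ℂ) 2 →L[ℂ] lp (fun _ : Γ => ℂ) 2)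
    (hMf : ∀ (ξ : lp (fun _ : Γ => ℂ) 2) (x : Γ), Mf ξ x = f x * ξ x)
    (vγ : lp (fun _ : Γ => ℂ) 2 →L[ℂ] lp (fun _ : Γ => ℂ) 2)
    (hvγ : ∀ x : Γ, vγ (lp.single 2 x (1 : ℂ)) = lp.single 2 (x * γ) (1 : ℂ)) :
    IsCompactOperator (vγ ∘L Mf - Mf ∘L vγ) := by
  have hv (ξ : lp (fun _ : Γ => ℂ) 2) (y : Γ) : vγ ξ y = ξ (y * γ⁻¹) := by
    simpa using lp.apply_eq_of_map_single ENNReal.ofNat_ne_top (mul_left_injective γ) vγ hvγ ξ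
      (y * γ⁻¹)
  have h_diff : Tendsto (fun x => f (x * γ) - f x) cofinite (𝓝 0) :=
    Metric.tendsto_nhds.2 fun ε hε => eventually_cofinite.2 <|
      (hf ε hε).subset fun x hx => by simpa [dist_eq_norm] using hx
  have hg : Tendsto (fun y => f (y * γ⁻¹) - f y) cofinite (𝓝 0) := by
    simpa using (h_diff.comp (mul_left_injective γ⁻¹).tendsto_cofinite).neg
  refine lp.isCompactOperator_of_apply_eq_mul hg vγ _ fun ξ y => ?_
  simp only [sub_apply, ContinuousLinearMap.comp_apply, AddSubgroupClass.coe_sub, PreLp.sub_apply,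
    hv, hMf]
  ring

/-- The key step in the proof of the paper's Lemma 21(1).  Let `Γ` be a group, `γ ∈ Γ`,
and let `f : Γ → ℂ` be a bounded function such that `x ↦ f (x * γ) - f x` tends to `0`
along the cofinite filter on `Γ` (for every `ε > 0` the set where `‖f (x * γ) - f x‖ ≥ ε`
is finite).  Then the commutator of the right-translation unitary `v_γ` with the
multiplication operator `M_f` is a compact operator on `ℓ²(Γ)`. -/
theorem commutator_right_translation_mult_compact_of_cofinite
    {Γ : Type*} [Group Γ] [DecidableEq Γ]
    (γ : Γ) (f : Γ → ℂ)
    (hf_bdd : ∃ C : ℝ, ∀ x : Γ, ‖f x‖ ≤ C)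
    (hf : ∀ ε : ℝ, 0 < ε → {x : Γ | ε ≤ ‖f (x * γ) - f x‖}.Finite)
    (Mf : lp (fun _ : Γ => ℂ) 2 →L[ℂ] lp (fun _ : Γ => ℂ) 2)
    (hMf : ∀ (ξ : lp (fun _ : Γ => ℂ) 2) (x : Γ), Mf ξ x = f x * ξ x)
    (vγ : lp (fun _ : Γ => ℂ) 2 →L[ℂ] lp (fun _ : Γ => ℂ) 2)
    (hvγ : ∀ x : Γ, vγ (lp.single 2 x (1 : ℂ)) = lp.single 2 (x * γ) (1 : ℂ)) :
    IsCompactOperator (vγ ∘L Mf - Mf ∘L vγ) :=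
  commutator_right_translation_mult_compact_of_cofinite_general γ f hf Mf hMf vγ hvγ
end

section
/- Let Γ be a group equipped with a proper left-invariant metric d. Let T be a bounded operator on ℓ²(Γ) of finite propagation: there exists R ≥ 0 such that ⟨e_y, T e_x⟩ = 0 whenever d(x,y) > R. Let f : Γ → ℂ be a bounded function satisfying the Higson condition: for every ε > 0 and every S ≥ 0 the set {x ∈ Γ | ∃ y, d(x,y) ≤ S and |f(x) − f(y)| ≥ ε} is finite. Then the commutator T ∘ M_f − M_f ∘ T is a compact operator on ℓ²(Γ). (This is the paper's Remark 22: any operator of finite propagation commutes modulo compact operators with multiplication by a function that extends continuously to the Gromov compactification; the continuity hypothesis is expressed by the Higson condition.) -/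
/-!
For `ε > 0` the Higson condition gives a finite set `F` off which `f` varies by less than `ε`
across distance `R`. Compressing the commutator `C` by the finite-rank coordinate projection
`P_F` leaves `C - C P_F`, whose matrix entries `(f x - f y) ⟨e_y, T e_x⟩` vanish for `x ∈ F` or
`d x y > R` and are otherwise at most `ε ‖T‖`. Balls of radius `R` all have the cardinality `N`
of the ball about `1` by left invariance, so a Schur-type bound gives `‖C - C P_F‖ ≤ ε ‖T‖ N`.
Hence `C` is a norm limit of finite-rank operators.
-/

open Finset

section Coordinates

variable {ι 𝕜 : Type*} [DecidableEq ι] [NontriviallyNormedField 𝕜] {p : ENNReal} [Fact (1 ≤ p)]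

theorem lp.hasSum_clm_apply (hp : p ≠ ⊤) (A : lp (fun _ : ι => 𝕜) p →L[𝕜] lp (fun _ : ι => 𝕜) p)
    (ξ : lp (fun _ : ι => 𝕜) p) (y : ι) :
    HasSum (fun x => ξ x * A (lp.single p x 1) y) (A ξ y) := by
  have h := (lp.hasSum_single hp ξ).mapL ((lp.evalCLM 𝕜 (fun _ : ι => 𝕜) p y).comp A)
  have hterm : ∀ x, lp.single p x (ξ x) = ξ x • (lp.single p x 1 : lp (fun _ : ι => 𝕜) p) := by
    intro x
    rw [← lp.single_smul, smul_eq_mul, mul_one]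
  simp only [hterm, map_smul, smul_eq_mul] at h
  exact h

theorem lp.norm_clm_apply_single_le (A : lp (fun _ : ι => 𝕜) p →L[𝕜] lp (fun _ : ι => 𝕜) p)
    (x y : ι) : ‖A (lp.single p x 1) y‖ ≤ ‖A‖ := by
  have hp : 0 < p := zero_lt_one.trans_le Fact.out
  calc ‖A (lp.single p x 1) y‖ ≤ ‖A (lp.single p x 1)‖ := lp.norm_apply_le_norm hp.ne' _ y
    _ ≤ ‖A‖ * ‖(lp.single p x 1 : lp (fun _ : ι => 𝕜) p)‖ := A.le_opNorm _
    _ = ‖A‖ := by rw [lp.norm_single hp, norm_one, mul_one]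

end Coordinates

theorem isCompactOperator_of_forall_exists_norm_sub_le_mul {𝕜 E F : Type*}
    [NontriviallyNormedField 𝕜] [NormedAddCommGroup E] [NormedSpace 𝕜 E]
    [NormedAddCommGroup F] [NormedSpace 𝕜 F] [CompleteSpace F] (A : E →L[𝕜] F) (M : ℝ)
    (h : ∀ ε > 0, ∃ K : E →L[𝕜] F, IsCompactOperator K ∧ ‖A - K‖ ≤ ε * M) :
    IsCompactOperator A := by
  have hA : A ∈ closure {K : E →L[𝕜] F | IsCompactOperator K} := by
    refine Metric.mem_closure_iff.2 fun δ hδ => ?_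
    have hM : 0 < |M| + 1 := by positivity
    obtain ⟨K, hK, hAK⟩ := h (δ / (|M| + 1)) (by positivity)
    refine ⟨K, hK, ?_⟩
    calc dist A K = ‖A - K‖ := dist_eq_norm A K
      _ ≤ δ / (|M| + 1) * |M| := hAK.trans (by gcongr; exact le_abs_self M)
      _ < δ / (|M| + 1) * (|M| + 1) := by gcongr; linarith
      _ = δ := div_mul_cancel₀ δ hM.ne'
  rwa [isClosed_setOfPred_isCompactOperator.closure_eq] at hA

theorem Finset.sum_sum_le_mul_sum_biUnion {ι : Type*} [DecidableEq ι] (S : ι → Finset ι)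
    (hS_symm : ∀ x y, x ∈ S y → y ∈ S x) {N : ℕ} (hS_card : ∀ x, #(S x) ≤ N)
    (g : ι → ℝ) (hg : ∀ x, 0 ≤ g x) (Y : Finset ι) :
    ∑ y ∈ Y, ∑ x ∈ S y, g x ≤ N * ∑ x ∈ Y.biUnion S, g x := by
  rw [Finset.sum_comm' (t' := Y.biUnion S) (s' := fun x => Y.filter (x ∈ S ·))
    (by intro y x; simp only [mem_biUnion, mem_filter]; constructor <;> aesop), Finset.mul_sum]
  refine Finset.sum_le_sum fun x _ => ?_
  rw [Finset.sum_const, nsmul_eq_mul]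
  have hcard : #(Y.filter (x ∈ S ·)) ≤ N :=
    (Finset.card_le_card fun y hy => hS_symm x y (Finset.mem_filter.1 hy).2).trans (hS_card x)
  exact mul_le_mul_of_nonneg_right (by exact_mod_cast hcard) (hg x)

section L2

variable {ι : Type*} [DecidableEq ι]

local notation "ℓ²(" ι ")" => lp (fun _ : ι => ℂ) 2

theorem opNorm_le_of_band {A : ℓ²(ι) →L[ℂ] ℓ²(ι)} (S : ι → Finset ι)
    (hS_symm : ∀ x y, x ∈ S y → y ∈ S x) {N : ℕ} (hS_card : ∀ x, #(S x) ≤ N)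
    (h_supp : ∀ x y, x ∉ S y → A (lp.single 2 x 1) y = 0)
    {B : ℝ} (hB : 0 ≤ B) (h_bdd : ∀ y, ∀ x ∈ S y, ‖A (lp.single 2 x 1) y‖ ≤ B) :
    ‖A‖ ≤ B * N := by
  refine A.opNorm_le_bound (by positivity) fun ξ => ?_
  have h_row : ∀ y, ‖A ξ y‖ ≤ B * ∑ x ∈ S y, ‖ξ x‖ := by
    intro y
    have h_fin : ∀ x ∉ S y, ξ x * A (lp.single 2 x 1) y = 0 := fun x hx => by
      rw [h_supp x y hx, mul_zero]
    rw [(lp.hasSum_clm_apply ENNReal.ofNat_ne_top A ξ y).unique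
      (hasSum_sum_of_ne_finset_zero h_fin), Finset.mul_sum]
    refine (norm_sum_le _ _).trans (Finset.sum_le_sum fun x hx => ?_)
    rw [norm_mul, mul_comm]
    gcongr
    exact h_bdd y x hx
  have h_row_sq : ∀ y, ‖A ξ y‖ ^ 2 ≤ B ^ 2 * N * ∑ x ∈ S y, ‖ξ x‖ ^ 2 := by
    intro y
    calc ‖A ξ y‖ ^ 2 ≤ B ^ 2 * (∑ x ∈ S y, ‖ξ x‖) ^ 2 := by
          rw [← mul_pow]; gcongr; exact h_row y
      _ ≤ B ^ 2 * (#(S y) * ∑ x ∈ S y, ‖ξ x‖ ^ 2) := by gcongr; exact sq_sum_le_card_mul_sum_sq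
      _ ≤ B ^ 2 * N * ∑ x ∈ S y, ‖ξ x‖ ^ 2 := by
          rw [mul_assoc]; gcongr; exact_mod_cast hS_card y
  refine lp.norm_le_of_forall_sum_le (by norm_num) (by positivity) fun Y => ?_
  simp only [ENNReal.toReal_ofNat, Real.rpow_two]
  calc ∑ y ∈ Y, ‖A ξ y‖ ^ 2 ≤ ∑ y ∈ Y, B ^ 2 * N * ∑ x ∈ S y, ‖ξ x‖ ^ 2 :=
        Finset.sum_le_sum fun y _ => h_row_sq y
    _ ≤ B ^ 2 * N * (N * ∑ x ∈ Y.biUnion S, ‖ξ x‖ ^ 2) := by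
        rw [← Finset.mul_sum]
        gcongr
        exact Finset.sum_sum_le_mul_sum_biUnion S hS_symm hS_card _ (fun x => by positivity) Y
    _ ≤ B ^ 2 * N * (N * ‖ξ‖ ^ 2) := by
        gcongr
        simpa only [ENNReal.toReal_ofNat, Real.rpow_two] using
          lp.sum_rpow_le_norm_rpow (by norm_num) ξ (Y.biUnion S)
    _ = (B * N * ‖ξ‖) ^ 2 := by ring

noncomputable def finsetProj (F : Finset ι) : ℓ²(ι) →L[ℂ] ℓ²(ι) :=
  ∑ x ∈ F, (lp.evalCLM ℂ (fun _ : ι => ℂ) 2 x).smulRight (lp.single 2 x 1)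

theorem isCompactOperator_finsetProj (F : Finset ι) : IsCompactOperator (finsetProj F) := by
  refine Submodule.sum_mem (compactOperator (RingHom.id ℂ) ℓ²(ι) ℓ²(ι)) fun x _ => ?_
  exact (isCompactOperator_of_locallyCompactSpace_dom (lp.evalCLM ℂ (fun _ : ι => ℂ) 2 x)
    ).continuous_comp (continuous_id.smul continuous_const)

theorem finsetProj_single (F : Finset ι) (z : ι) :
    finsetProj F (lp.single 2 z 1) = if z ∈ F then lp.single 2 z 1 else 0 := by
  rw [finsetProj, _root_.sum_apply]
  change ∑ x ∈ F, (lp.single 2 z 1 : ℓ²(ι)) x • (lp.single 2 x 1 : ℓ²(ι)) = _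
  simp [lp.single_apply, Pi.single_apply]

theorem opNorm_sub_comp_finsetProj_le {A : ℓ²(ι) →L[ℂ] ℓ²(ι)} (S : ι → Finset ι)
    (hS_symm : ∀ x y, x ∈ S y → y ∈ S x) {N : ℕ} (hS_card : ∀ x, #(S x) ≤ N)
    (h_supp : ∀ x y, x ∉ S y → A (lp.single 2 x 1) y = 0) (F : Finset ι)
    {B : ℝ} (hB : 0 ≤ B) (h_bdd : ∀ y, ∀ x ∈ S y, x ∉ F → ‖A (lp.single 2 x 1) y‖ ≤ B) :
    ‖A - A ∘L finsetProj F‖ ≤ B * N := by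
  have h_entry : ∀ x y, (A - A ∘L finsetProj F) (lp.single 2 x 1) y =
      if x ∈ F then 0 else A (lp.single 2 x 1) y := by
    intro x y
    by_cases hx : x ∈ F <;> simp [finsetProj_single, hx]
  refine opNorm_le_of_band S hS_symm hS_card (fun x y hxy => ?_) hB fun y x hxy => ?_
  · rw [h_entry, h_supp x y hxy, ite_self]
  · rw [h_entry]
    split_ifs with hx
    · simpa using hB
    · exact h_bdd y x hxy hx

end L2

theorem ncard_setOf_le_eq_of_leftInvariant {Γ : Type*} [Group Γ] (d : Γ → Γ → ℝ)
    (hd_leftinv : ∀ g x y : Γ, d (g * x) (g * y) = d x y) (x : Γ) (R : ℝ) :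
    {y | d x y ≤ R}.ncard = {y | d 1 y ≤ R}.ncard := by
  have h : {y | d x y ≤ R} = (x * ·) '' {y | d 1 y ≤ R} := by
    ext y
    refine ⟨fun hy => ⟨x⁻¹ * y, ?_, mul_inv_cancel_left x y⟩, ?_⟩
    · simpa [← hd_leftinv x⁻¹ x y] using hy
    · rintro ⟨z, hz, rfl⟩
      simpa [← hd_leftinv x 1 z] using hz
  rw [h, Set.ncard_image_of_injective _ (mul_right_injective x)]

theorem commutator_mul_apply_single {ι : Type*} [DecidableEq ι]
    (T Mf : lp (fun _ : ι => ℂ) 2 →L[ℂ] lp (fun _ : ι => ℂ) 2) {f : ι → ℂ}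
    (hMf : ∀ (ξ : lp (fun _ : ι => ℂ) 2) (x : ι), Mf ξ x = f x * ξ x) (x y : ι) :
    (T ∘L Mf - Mf ∘L T) (lp.single 2 x 1) y = (f x - f y) * T (lp.single 2 x 1) y := by
  have h_single : Mf (lp.single 2 x 1) = f x • lp.single 2 x 1 := by
    ext z
    by_cases hz : z = x
    · subst hz; simp [hMf]
    · simp [hMf, hz]
  rw [_root_.sub_apply, ContinuousLinearMap.comp_apply, ContinuousLinearMap.comp_apply,
    h_single, map_smul, lp.coeFn_sub, Pi.sub_apply, lp.coeFn_smul, Pi.smul_apply, hMf, smul_eq_mul,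
    sub_mul]

theorem commutator_finite_propagation_mult_compact_general
    {Γ : Type*} [Group Γ] [DecidableEq Γ]
    (d : Γ → Γ → ℝ)
    (hd_symm : ∀ x y : Γ, d x y = d y x)
    (hd_leftinv : ∀ g x y : Γ, d (g * x) (g * y) = d x y)
    (hd_proper : ∀ (x : Γ) (R : ℝ), {y : Γ | d x y ≤ R}.Finite)
    (T : lp (fun _ : Γ => ℂ) 2 →L[ℂ] lp (fun _ : Γ => ℂ) 2)
    (hT_prop : ∃ R : ℝ, 0 ≤ R ∧ ∀ x y : Γ, R < d x y →
      (inner ℂ (lp.single 2 y (1 : ℂ)) (T (lp.single 2 x (1 : ℂ))) : ℂ) = 0)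
    (f : Γ → ℂ)
    (hf : ∀ ε : ℝ, 0 < ε → ∀ S : ℝ, 0 ≤ S →
      {x : Γ | ∃ y : Γ, d x y ≤ S ∧ ε ≤ ‖f x - f y‖}.Finite)
    (Mf : lp (fun _ : Γ => ℂ) 2 →L[ℂ] lp (fun _ : Γ => ℂ) 2)
    (hMf : ∀ (ξ : lp (fun _ : Γ => ℂ) 2) (x : Γ), Mf ξ x = f x * ξ x) :
    IsCompactOperator (T ∘L Mf - Mf ∘L T) := by
  obtain ⟨R, hR, hT_band⟩ := hT_prop
  set N := {y | d 1 y ≤ R}.ncard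
  let S : Γ → Finset Γ := fun y => (hd_proper y R).toFinset
  have hS_mem : ∀ x y, x ∈ S y ↔ d x y ≤ R := fun x y => by simp [S, hd_symm y x]
  have hS_symm : ∀ x y, x ∈ S y → y ∈ S x := fun x y => by simp [hS_mem, hd_symm x y]
  have hS_card : ∀ y, #(S y) ≤ N := fun y => by
    rw [← Set.ncard_eq_toFinset_card _ (hd_proper y R),
      ncard_setOf_le_eq_of_leftInvariant d hd_leftinv]
  have hC_supp : ∀ x y, x ∉ S y → (T ∘L Mf - Mf ∘L T) (lp.single 2 x 1) y = 0 := by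
    intro x y hxy
    have hT := hT_band x y (not_le.1 ((hS_mem x y).not.1 hxy))
    simp only [lp.inner_single_left, RCLike.inner_apply, map_one, mul_one] at hT
    rw [commutator_mul_apply_single T Mf hMf, hT, mul_zero]
  refine isCompactOperator_of_forall_exists_norm_sub_le_mul _ (‖T‖ * N) fun ε hε => ?_
  let F := (hf ε hε R hR).toFinset
  refine ⟨(T ∘L Mf - Mf ∘L T) ∘L finsetProj F,
    (isCompactOperator_finsetProj F).clm_comp (T ∘L Mf - Mf ∘L T), ?_⟩
  rw [← mul_assoc]
  refine opNorm_sub_comp_finsetProj_le S hS_symm hS_card hC_supp F (by positivity)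
    fun y x hxy hxF => ?_
  have hfε : ‖f x - f y‖ ≤ ε := by
    by_contra! h
    exact hxF ((Set.Finite.mem_toFinset _).2 ⟨y, (hS_mem x y).1 hxy, h.le⟩)
  rw [commutator_mul_apply_single T Mf hMf, norm_mul]
  exact mul_le_mul hfε (lp.norm_clm_apply_single_le T x y) (norm_nonneg _) hε.le

/-- The paper's Remark 22.  Let `Γ` be a group with a proper left-invariant metric `d`,
let `T` be a bounded operator on `ℓ²(Γ)` of finite propagation (there is `R ≥ 0` with
`⟨e_y, T e_x⟩ = 0` whenever `d x y > R`), and let `f : Γ → ℂ` be a bounded function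
satisfying the Higson condition: for every `ε > 0` and `S ≥ 0` the set of `x` admitting
some `y` with `d x y ≤ S` and `‖f x - f y‖ ≥ ε` is finite.  Then the commutator
`T ∘ M_f - M_f ∘ T` is a compact operator on `ℓ²(Γ)`. -/
theorem commutator_finite_propagation_mult_compact
    {Γ : Type*} [Group Γ] [DecidableEq Γ]
    (d : Γ → Γ → ℝ)
    (hd_self : ∀ x : Γ, d x x = 0)
    (hd_sep : ∀ x y : Γ, d x y = 0 → x = y)
    (hd_symm : ∀ x y : Γ, d x y = d y x)
    (hd_triangle : ∀ x y z : Γ, d x z ≤ d x y + d y z)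
    (hd_leftinv : ∀ g x y : Γ, d (g * x) (g * y) = d x y)
    (hd_proper : ∀ (x : Γ) (R : ℝ), {y : Γ | d x y ≤ R}.Finite)
    (T : lp (fun _ : Γ => ℂ) 2 →L[ℂ] lp (fun _ : Γ => ℂ) 2)
    (hT_prop : ∃ R : ℝ, 0 ≤ R ∧ ∀ x y : Γ, R < d x y →
      (inner ℂ (lp.single 2 y (1 : ℂ)) (T (lp.single 2 x (1 : ℂ))) : ℂ) = 0)
    (f : Γ → ℂ)
    (hf_bdd : ∃ C : ℝ, ∀ x : Γ, ‖f x‖ ≤ C)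
    (hf : ∀ ε : ℝ, 0 < ε → ∀ S : ℝ, 0 ≤ S →
      {x : Γ | ∃ y : Γ, d x y ≤ S ∧ ε ≤ ‖f x - f y‖}.Finite)
    (Mf : lp (fun _ : Γ => ℂ) 2 →L[ℂ] lp (fun _ : Γ => ℂ) 2)
    (hMf : ∀ (ξ : lp (fun _ : Γ => ℂ) 2) (x : Γ), Mf ξ x = f x * ξ x) :
    IsCompactOperator (T ∘L Mf - Mf ∘L T) :=
  commutator_finite_propagation_mult_compact_general d hd_symm hd_leftinv hd_proper T hT_prop f hf
    Mf hMf
end
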